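/- arXiv:0911.0534 — 2 statements merged into one kernel-verified Lean document; each statement's English description precedes it below -/
import Mathlib

section
/- If f ∈ B_n^σ(β) with Taylor expansion f(z) = z + Σ_{k≥2} a_k z^k, then |a_k| ≤ 2(1−β)·(σ-(n-1))_n/(σ+k-1-(n-1))_n for all k ≥ 2, and these bounds are sharp. -/
open Complex MeasureTheory

/-- The Carathéodory class `P`: analytic on the unit disk, value `1` at `0`,
positive real part. -/
def IsCara (p : ℂ → ℂ) : Prop :=
  DifferentiableOn ℂ p (Metric.ball 0 1) ∧ p 0 = 1 ∧
    ∀ z ∈ Metric.ball (0 : ℂ) 1, 0 < (p z).re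

/-- The σ-nth integral iterate (averaged form after substituting `t = s z`):
`p_{σ,n}(z) = (σ-(n-1)) ∫_0^1 s^(σ-n) p_{σ,n-1}(s z) ds`. -/
noncomputable def sigmaIter (σ : ℝ) : ℕ → (ℂ → ℂ) → (ℂ → ℂ)
  | 0, p => p
  | (n + 1), p => fun z =>
      ((σ - (n : ℝ)) : ℂ) *
        ∫ s in (0 : ℝ)..1, ((s ^ (σ - ((n : ℝ) + 1)) : ℝ) : ℂ) * sigmaIter σ n p ((s : ℂ) * z)

/-- The coefficient multiplier `[σ]_{n/k} = (σ-(n-1))_n / (σ+k-(n-1))_n`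
(Pochhammer / rising factorial). -/
noncomputable def poch (σ : ℝ) (n k : ℕ) : ℝ :=
  (ascPochhammer ℝ n).eval (σ - ((n : ℝ) - 1)) /
    (ascPochhammer ℝ n).eval (σ + (k : ℝ) - ((n : ℝ) - 1))

/-- Membership in `P_n^σ`. -/
def MemPn (σ : ℝ) (n : ℕ) (q : ℂ → ℂ) : Prop :=
  ∃ p : ℂ → ℂ, IsCara p ∧ ∀ z ∈ Metric.ball (0 : ℂ) 1, q z = sigmaIter σ n p z

/-- Membership in `B_n^σ(β)`: `f(z) = z (β + (1-β) p_{σ,n}(z))` for some Carathéodory `p`. -/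
def MemB (σ : ℝ) (n : ℕ) (β : ℝ) (f : ℂ → ℂ) : Prop :=
  ∃ p : ℂ → ℂ, IsCara p ∧ ∀ z ∈ Metric.ball (0 : ℂ) 1,
    f z = z * ((β : ℂ) + ((1 : ℂ) - β) * sigmaIter σ n p z)

/-!
The integral iterate acts diagonally on Taylor coefficients: one step
`q ↦ (σ - m) ∫₀¹ s^(σ-m-1) q(s z) ds` multiplies the `k`-th coefficient by `(σ - m)/(σ - m + k)`,
so `p_{σ,n}` has coefficients `[σ]_{n/k} c_k` and `a_k = (1 - β) [σ]_{n/(k-1)} c_{k-1}` for `k ≥ 2`.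
The bound is then Carathéodory's `|c_k| ≤ 2`, which comes from writing `c_k r^k` as the average
of `2 Re p(z) (z/r)^(-k)` over the circle `|z| = r` (Cauchy's formula plus the mean value property
of `z^k p(z)`), and it is attained by `p(z) = (1 + z)/(1 - z)`, all of whose coefficients are `2`.
-/

open Metric Filter Topology Real ComplexConjugate
open scoped Nat

section poch

variable {σ : ℝ} {n : ℕ}

lemma poch_pos (hσ : 0 < σ - ((n : ℝ) - 1)) (k : ℕ) : 0 < poch σ n k :=
  div_pos (ascPochhammer_pos n _ hσ) (ascPochhammer_pos n _ (by linarith [k.cast_nonneg (α := ℝ)]))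

lemma poch_zero_right (hσ : 0 < σ - ((n : ℝ) - 1)) : poch σ n 0 = 1 := by
  rw [poch, Nat.cast_zero, add_zero, div_self (ascPochhammer_pos n _ hσ).ne']

lemma poch_succ (k : ℕ) :
    poch σ (n + 1) k = poch σ n k * ((σ - n) / (σ - n + k)) := by
  have eval_succ (x : ℝ) :
      (ascPochhammer ℝ (n + 1)).eval x = x * (ascPochhammer ℝ n).eval (x + 1) := by
    simp [ascPochhammer_succ_left, Polynomial.eval_comp]
  rw [poch, poch, eval_succ, eval_succ, mul_div_mul_comm, mul_comm]
  push_cast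
  congr 2 <;> congr 1 <;> ring

end poch

lemma integral_rpow_mul_pow_mul {e : ℝ} (he : -1 < e) (w : ℂ) (k : ℕ) :
    ∫ s in (0:ℝ)..1, ((s ^ e : ℝ) : ℂ) * (w * (s : ℂ) ^ k) = w / (e + k + 1) := by
  have hek : -1 < e + k := by linarith [k.cast_nonneg (α := ℝ)]
  have hpos : ∀ᵐ s ∂volume, s ∈ Set.uIoc (0:ℝ) 1 →
      ((s ^ e : ℝ) : ℂ) * (w * (s : ℂ) ^ k) = w * ((s ^ (e + k) : ℝ) : ℂ) := by
    refine Eventually.of_forall fun s hs => ?_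
    rw [Set.uIoc_of_le zero_le_one] at hs
    rw [Real.rpow_add hs.1, Real.rpow_natCast]
    push_cast
    ring
  rw [intervalIntegral.integral_congr_ae hpos, intervalIntegral.integral_const_mul,
    intervalIntegral.integral_ofReal, integral_rpow (Or.inl hek), Real.one_rpow,
    Real.zero_rpow (by linarith)]
  push_cast
  ring

lemma hasSum_integral_rpow_mul_comp {q : ℂ → ℂ} {b : ℕ → ℂ}
    (hq : ∀ z ∈ ball (0:ℂ) 1, HasSum (fun k => b k * z ^ k) (q z)) {e : ℝ} (he : -1 < e)
    {z : ℂ} (hz : z ∈ ball (0:ℂ) 1) :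
    HasSum (fun k => b k * z ^ k / (e + k + 1))
      (∫ s in (0:ℝ)..1, ((s ^ e : ℝ) : ℂ) * q (s * z)) := by
  have habs : Summable fun k => ‖b k * z ^ k‖ := summable_norm_iff.mpr (hq z hz).summable
  simp_rw [← integral_rpow_mul_pow_mul he]
  refine intervalIntegral.hasSum_integral_of_dominated_convergence
    (fun k s => ‖b k * z ^ k‖ * s ^ e) (fun k => ?_) (fun k => ?_) ?_ ?_ ?_
  · fun_prop
  · refine Eventually.of_forall fun s hs => ?_
    rw [Set.uIoc_of_le zero_le_one] at hs
    have hse : 0 ≤ s ^ e := Real.rpow_nonneg hs.1.le e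
    rw [norm_mul, norm_mul, Complex.norm_real, Real.norm_of_nonneg hse, norm_pow,
      Complex.norm_real, Real.norm_of_nonneg hs.1.le, mul_comm]
    gcongr
    exact mul_le_of_le_one_right (norm_nonneg _) (pow_le_one₀ hs.1.le hs.2)
  · exact Eventually.of_forall fun s _ => habs.mul_right _
  · simp_rw [tsum_mul_right]
    exact (intervalIntegral.intervalIntegrable_rpow' he).const_mul _
  · refine Eventually.of_forall fun s hs => ?_
    rw [Set.uIoc_of_le zero_le_one] at hs
    have hsz : (s : ℂ) * z ∈ ball (0:ℂ) 1 := by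
      rw [mem_ball_zero_iff, norm_mul, Complex.norm_real, Real.norm_of_nonneg hs.1.le]
      exact (mul_le_of_le_one_left (norm_nonneg z) hs.2).trans_lt (mem_ball_zero_iff.mp hz)
    refine ((hq _ hsz).mul_left ((s ^ e : ℝ) : ℂ)).congr_fun fun k => ?_
    ring

lemma hasSum_sigmaIter {σ : ℝ} {n : ℕ} (hσ : 0 < σ - ((n : ℝ) - 1)) {p : ℂ → ℂ} {c : ℕ → ℂ}
    (hc : ∀ z ∈ ball (0:ℂ) 1, HasSum (fun k => c k * z ^ k) (p z)) :
    ∀ z ∈ ball (0:ℂ) 1, HasSum (fun k => poch σ n k * c k * z ^ k) (sigmaIter σ n p z) := by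
  induction n with
  | zero => simpa [poch, sigmaIter] using hc
  | succ n ih =>
    intro z hz
    push_cast at hσ
    have hstep := hasSum_integral_rpow_mul_comp (ih (by linarith)) (e := σ - ((n : ℝ) + 1))
      (by linarith) hz
    rw [sigmaIter]
    refine (hstep.mul_left ((σ : ℂ) - ((n : ℝ) : ℂ))).congr_fun fun k => ?_
    have hk : (0 : ℝ) < σ - n + k := by linarith [k.cast_nonneg (α := ℝ)]
    have hk' : (σ : ℂ) - n + k ≠ 0 := by exact_mod_cast hk.ne'
    rw [poch_succ]
    push_cast
    rw [show (σ : ℂ) - (n + 1) + k + 1 = σ - n + k by ring]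
    field_simp

lemma norm_circleAverage_le {E : Type*} [NormedAddCommGroup E] [NormedSpace ℝ E]
    (f : ℂ → E) (c : ℂ) (R : ℝ) :
    ‖circleAverage f c R‖ ≤ circleAverage (fun z => ‖f z‖) c R := by
  rw [circleAverage_def, circleAverage_def, norm_smul, Real.norm_of_nonneg (by positivity),
    smul_eq_mul]
  gcongr
  exact intervalIntegral.norm_integral_le_integral_norm Real.two_pi_pos.le

lemma circleAverage_conj (f : ℂ → ℂ) (c : ℂ) (R : ℝ) :
    circleAverage (fun z => conj (f z)) c R = conj (circleAverage f c R) := by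
  simp [circleAverage_def, intervalIntegral.integral_of_le two_pi_pos.le, integral_conj,
    map_ofNat]

lemma circleAverage_re {f : ℂ → ℂ} {c : ℂ} {R : ℝ} (hf : CircleIntegrable f c R) :
    circleAverage (fun z => (f z).re) c R = (circleAverage f c R).re := by
  simpa [Function.comp_def] using Complex.reCLM.circleAverage_comp_comm hf

lemma inv_pow_mul_two_re_eq {z : ℂ} (hz : z ≠ 0) (w : ℂ) (k : ℕ) :
    (z ^ k)⁻¹ * ((2 * w.re : ℝ) : ℂ)
      = (z ^ k)⁻¹ * w + ((‖z‖ ^ (2 * k))⁻¹ : ℝ) • conj (z ^ k * w) := by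
  have hconj : conj z = (‖z‖ : ℂ) ^ 2 / z := by
    rw [eq_div_iff hz, mul_comm, Complex.mul_conj']
  have hnorm : (‖z‖ : ℂ) ≠ 0 := Complex.ofReal_ne_zero.mpr (norm_ne_zero_iff.mpr hz)
  rw [← Complex.add_conj, Complex.real_smul, map_mul, map_pow, hconj]
  push_cast
  rw [div_pow, ← pow_mul]
  field_simp

section Taylor

variable {p : ℂ → ℂ} {r : ℝ}

lemma circleAverage_inv_pow_mul (hr : 0 < r) (hp : DifferentiableOn ℂ p (closedBall 0 r))
    (k : ℕ) :
    circleAverage (fun z => (z ^ k)⁻¹ * p z) 0 r = (k ! : ℂ)⁻¹ * iteratedDeriv k p 0 := by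
  have hintegrand : (fun z => (z - 0)⁻¹ • ((z ^ k)⁻¹ * p z))
      = fun z => (1 / (z - 0) ^ (k + 1)) • p z := by
    funext z
    simp only [sub_zero, smul_eq_mul, pow_succ, one_div, mul_inv]
    ring
  rw [circleAverage_eq_circleIntegral hr.ne', hintegrand,
    hp.circleIntegral_one_div_sub_center_pow_smul hr k, smul_eq_mul, smul_eq_mul, ← mul_assoc,
    div_eq_mul_inv, ← mul_assoc, inv_mul_cancel₀ two_pi_I_ne_zero, one_mul]

lemma diffContOnCl_ball_abs (hr : 0 < r) (hp : DifferentiableOn ℂ p (closedBall 0 r)) :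
    DiffContOnCl ℂ p (ball 0 |r|) := by
  rw [abs_of_pos hr]
  exact (hp.mono closure_ball_subset_closedBall).diffContOnCl

/- On `|z| = r` we have `conj z = r² / z`, so the average of `z⁻ᵏ conj (p z)` is the conjugate of
the average of `zᵏ p z`, which vanishes by the mean value property when `k ≠ 0`. -/
lemma taylorCoeff_eq_circleAverage_re (hr : 0 < r) (hp : DifferentiableOn ℂ p (closedBall 0 r))
    {k : ℕ} (hk : k ≠ 0) :
    (k ! : ℂ)⁻¹ * iteratedDeriv k p 0
      = circleAverage (fun z => (z ^ k)⁻¹ * ((2 * (p z).re : ℝ) : ℂ)) 0 r := by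
  have hpc : ContinuousOn p (sphere 0 r) := hp.continuousOn.mono sphere_subset_closedBall
  have hz0 : ∀ z ∈ sphere (0:ℂ) r, z ^ k ≠ 0 := fun z hz =>
    pow_ne_zero _ (ne_zero_of_mem_sphere hr.ne' ⟨z, hz⟩)
  have hint : CircleIntegrable (fun z => (z ^ k)⁻¹ * p z) 0 r :=
    ContinuousOn.circleIntegrable hr.le (((continuousOn_pow k).inv₀ hz0).mul hpc)
  have hmean : circleAverage (fun z => z ^ k * p z) 0 r = 0 := by
    rw [(diffContOnCl_ball_abs (p := fun z => z ^ k * p z) hr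
      ((differentiableOn_pow k).mul hp)).circleAverage]
    simp [hk]
  have hsphere : Set.EqOn (fun z => (z ^ k)⁻¹ * ((2 * (p z).re : ℝ) : ℂ))
      (fun z => (z ^ k)⁻¹ * p z + ((r ^ (2 * k))⁻¹ : ℝ) • conj (z ^ k * p z))
      (sphere 0 |r|) := by
    intro z hz
    rw [abs_of_pos hr] at hz
    rw [← mem_sphere_zero_iff_norm.mp hz]
    exact inv_pow_mul_two_re_eq (ne_zero_of_mem_sphere hr.ne' ⟨z, hz⟩) _ _
  rw [circleAverage_congr_sphere hsphere,
    circleAverage_fun_add hint (ContinuousOn.circleIntegrable hr.le (by fun_prop)),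
    circleAverage_fun_smul, circleAverage_conj, hmean, circleAverage_inv_pow_mul hr hp]
  simp

theorem norm_taylorCoeff_mul_pow_le (hr : 0 < r) (hp : DifferentiableOn ℂ p (closedBall 0 r))
    (hre : ∀ z ∈ sphere (0:ℂ) r, 0 ≤ (p z).re) {k : ℕ} (hk : k ≠ 0) :
    ‖(k ! : ℂ)⁻¹ * iteratedDeriv k p 0‖ * r ^ k ≤ 2 * (p 0).re := by
  have hnorm : Set.EqOn (fun z => ‖(z ^ k)⁻¹ * ((2 * (p z).re : ℝ) : ℂ)‖)
      (fun z => (r ^ k)⁻¹ • (2 : ℝ) • (p z).re) (sphere 0 |r|) := by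
    intro z hz
    rw [abs_of_pos hr] at hz
    simp only [smul_eq_mul]
    rw [norm_mul, norm_inv, norm_pow, mem_sphere_zero_iff_norm.mp hz, Complex.norm_real,
      Real.norm_of_nonneg (by linarith [hre z hz])]
  have hre_avg : circleAverage (fun z => (p z).re) 0 r = (p 0).re := by
    rw [circleAverage_re ((hp.continuousOn.mono sphere_subset_closedBall).circleIntegrable hr.le),
      (diffContOnCl_ball_abs hr hp).circleAverage]
  rw [taylorCoeff_eq_circleAverage_re hr hp hk]
  calc ‖circleAverage (fun z => (z ^ k)⁻¹ * ((2 * (p z).re : ℝ) : ℂ)) 0 r‖ * r ^ k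
      ≤ circleAverage (fun z => ‖(z ^ k)⁻¹ * ((2 * (p z).re : ℝ) : ℂ)‖) 0 r * r ^ k := by
        gcongr
        exact norm_circleAverage_le _ _ _
    _ = 2 * (p 0).re := by
        rw [circleAverage_congr_sphere hnorm, circleAverage_fun_smul, circleAverage_fun_smul,
          hre_avg, smul_eq_mul, smul_eq_mul]
        field_simp

theorem norm_taylorCoeff_le_of_re_nonneg (hp : DifferentiableOn ℂ p (ball 0 1))
    (hre : ∀ z ∈ ball (0:ℂ) 1, 0 ≤ (p z).re) {k : ℕ} (hk : k ≠ 0) :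
    ‖(k ! : ℂ)⁻¹ * iteratedDeriv k p 0‖ ≤ 2 * (p 0).re := by
  set C := ‖(k ! : ℂ)⁻¹ * iteratedDeriv k p 0‖
  have hbound : ∀ r ∈ Set.Ioo (0:ℝ) 1, C * r ^ k ≤ 2 * (p 0).re := fun r hr =>
    norm_taylorCoeff_mul_pow_le hr.1 (hp.mono (closedBall_subset_ball hr.2))
      (fun z hz => hre z (sphere_subset_ball hr.2 hz)) hk
  have htend : Tendsto (fun r : ℝ => C * r ^ k) (𝓝[<] 1) (𝓝 C) := by
    have hcont : Continuous fun r : ℝ => C * r ^ k := by fun_prop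
    simpa using (hcont.tendsto 1).mono_left nhdsWithin_le_nhds
  exact le_of_tendsto htend (eventually_of_mem (Ioo_mem_nhdsLT zero_lt_one) hbound)

end Taylor

lemma hasFPowerSeriesOnBall_ofScalars {f : ℂ → ℂ} {a : ℕ → ℂ}
    (h : ∀ z ∈ ball (0:ℂ) 1, HasSum (fun k => a k * z ^ k) (f z)) :
    HasFPowerSeriesOnBall f (FormalMultilinearSeries.ofScalars ℂ a) 0 1 := by
  refine ⟨?_, one_pos, fun {y} hy => ?_⟩
  · refine ENNReal.le_of_forall_nnreal_lt fun ρ hρ =>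
      FormalMultilinearSeries.le_radius_of_summable _ ?_
    have hρ1 : ((ρ : ℝ) : ℂ) ∈ ball (0:ℂ) 1 := by simpa using hρ
    simpa [norm_mul, norm_pow] using summable_norm_iff.mpr (h _ hρ1).summable
  · have hy1 : y ∈ ball (0:ℂ) 1 := by rwa [← ENNReal.coe_one, eball_coe, NNReal.coe_one] at hy
    simpa [FormalMultilinearSeries.ofScalars_apply_eq, mul_comm] using h y hy1

lemma eq_of_hasSum_pow {f : ℂ → ℂ} {a b : ℕ → ℂ}
    (ha : ∀ z ∈ ball (0:ℂ) 1, HasSum (fun k => a k * z ^ k) (f z))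
    (hb : ∀ z ∈ ball (0:ℂ) 1, HasSum (fun k => b k * z ^ k) (f z)) : a = b :=
  FormalMultilinearSeries.ofScalars_series_injective ℂ ℂ <|
    (hasFPowerSeriesOnBall_ofScalars ha).hasFPowerSeriesAt.eq_formalMultilinearSeries
      (hasFPowerSeriesOnBall_ofScalars hb).hasFPowerSeriesAt

noncomputable def bCoeff (σ : ℝ) (n : ℕ) (β : ℝ) (c : ℕ → ℂ) : ℕ → ℂ
  | 0 => 0
  | j + 1 => (if j = 0 then (β : ℂ) else 0) + (1 - β) * poch σ n j * c j

lemma hasSum_bCoeff {σ : ℝ} {n : ℕ} (hσ : 0 < σ - ((n : ℝ) - 1)) (β : ℝ) {p : ℂ → ℂ}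
    {c : ℕ → ℂ} (hc : ∀ z ∈ ball (0:ℂ) 1, HasSum (fun k => c k * z ^ k) (p z)) :
    ∀ z ∈ ball (0:ℂ) 1, HasSum (fun k => bCoeff σ n β c k * z ^ k)
      (z * ((β : ℂ) + ((1 : ℂ) - β) * sigmaIter σ n p z)) := by
  intro z hz
  have hconst : HasSum (fun j : ℕ => (if j = 0 then (β : ℂ) else 0) * z ^ j) β :=
    (hasSum_ite_eq 0 (β : ℂ)).congr_fun fun j => by split_ifs <;> simp [*]
  have hinner := hconst.add ((hasSum_sigmaIter hσ hc z hz).mul_left ((1 : ℂ) - β))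
  rw [← hasSum_nat_add_iff' 1]
  simp only [Finset.range_one, Finset.sum_singleton, bCoeff, zero_mul, sub_zero]
  refine (hinner.mul_left z).congr_fun fun j => ?_
  ring

lemma norm_bCoeff_add_two {σ : ℝ} {n : ℕ} (hσ : 0 < σ - ((n : ℝ) - 1)) {β : ℝ} (hβ : β ≤ 1)
    (c : ℕ → ℂ) (j : ℕ) :
    ‖bCoeff σ n β c (j + 2)‖ = (1 - β) * poch σ n (j + 1) * ‖c (j + 1)‖ := by
  have hcoe : bCoeff σ n β c (j + 2) = (((1 - β) * poch σ n (j + 1) : ℝ) : ℂ) * c (j + 1) := by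
    simp [bCoeff]
  rw [hcoe, norm_mul, Complex.norm_real,
    Real.norm_of_nonneg (mul_nonneg (by linarith) (poch_pos hσ _).le)]

lemma one_sub_ne_zero_of_mem_ball {z : ℂ} (hz : z ∈ ball (0:ℂ) 1) : 1 - z ≠ 0 := by
  rw [sub_ne_zero]
  rintro rfl
  simp at hz

lemma isCara_one_add_div_one_sub : IsCara fun z => (1 + z) / (1 - z) := by
  refine ⟨?_, by simp, fun z hz => ?_⟩
  · exact (differentiableOn_const 1).add differentiableOn_id |>.div
      ((differentiableOn_const 1).sub differentiableOn_id) fun _ => one_sub_ne_zero_of_mem_ball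
  · have hnormSq : normSq z < 1 := by
      rw [normSq_eq_norm_sq]
      nlinarith [norm_nonneg z, mem_ball_zero_iff.mp hz]
    have hre : ((1 + z) / (1 - z)).re = (1 - normSq z) / normSq (1 - z) := by
      rw [div_re, ← add_div]
      simp only [add_re, sub_re, add_im, sub_im, one_re, one_im, normSq_apply]
      ring
    rw [hre]
    exact div_pos (by linarith) (normSq_pos.mpr (one_sub_ne_zero_of_mem_ball hz))

lemma hasSum_one_add_div_one_sub :
    ∀ z ∈ ball (0:ℂ) 1,
      HasSum (fun k => (if k = 0 then 1 else 2) * z ^ k) ((1 + z) / (1 - z)) := by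
  intro z hz
  have hgeom := ((hasSum_geometric_of_norm_lt_one (mem_ball_zero_iff.mp hz)).mul_left 2).sub
    (hasSum_ite_eq 0 (1 : ℂ))
  have hval : (1 + z) / (1 - z) = 2 * (1 - z)⁻¹ - 1 := by
    field_simp [one_sub_ne_zero_of_mem_ball hz]
    ring
  rw [hval]
  refine hgeom.congr_fun fun k => ?_
  split_ifs with hk
  · subst hk
    norm_num
  · ring

section ClassB

variable {σ : ℝ} {n : ℕ} {β : ℝ}

lemma norm_coeff_le_of_memB (hσ : 0 < σ - ((n : ℝ) - 1)) (hβ : β ≤ 1) {f : ℂ → ℂ}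
    {a : ℕ → ℂ} (hf : MemB σ n β f)
    (ha : ∀ z ∈ ball (0 : ℂ) 1, HasSum (fun k => a k * z ^ k) (f z)) {k : ℕ} (hk : 2 ≤ k) :
    ‖a k‖ ≤ 2 * (1 - β) * poch σ n (k - 1) := by
  obtain ⟨p, ⟨hp, hp0, hre⟩, hfp⟩ := hf
  have hc (z) (hz : z ∈ ball (0:ℂ) 1) :
      HasSum (fun j => (j ! : ℂ)⁻¹ * iteratedDeriv j p 0 * z ^ j) (p z) := by
    simpa [mul_comm, mul_left_comm] using Complex.hasSum_taylorSeries_on_ball hp hz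
  have hab : a = bCoeff σ n β _ :=
    eq_of_hasSum_pow ha fun z hz => hfp z hz ▸ hasSum_bCoeff hσ β hc z hz
  obtain ⟨j, rfl⟩ : ∃ j, k = j + 2 := ⟨k - 2, by omega⟩
  have hcoeff := norm_taylorCoeff_le_of_re_nonneg hp (fun z hz => (hre z hz).le)
    (Nat.add_one_ne_zero j)
  rw [hp0, Complex.one_re, mul_one] at hcoeff
  rw [hab, norm_bCoeff_add_two hσ hβ, show j + 2 - 1 = j + 1 by omega]
  calc (1 - β) * poch σ n (j + 1) * ‖_‖ ≤ (1 - β) * poch σ n (j + 1) * 2 :=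
        mul_le_mul_of_nonneg_left hcoeff (mul_nonneg (by linarith) (poch_pos hσ _).le)
    _ = 2 * (1 - β) * poch σ n (j + 1) := by ring

lemma memB_extremal (σ : ℝ) (n : ℕ) (β : ℝ) :
    MemB σ n β fun z => z * ((β : ℂ) + (1 - β) * sigmaIter σ n (fun w => (1 + w) / (1 - w)) z) :=
  ⟨_, isCara_one_add_div_one_sub, fun _ _ => rfl⟩

lemma norm_bCoeff_extremal (hσ : 0 < σ - ((n : ℝ) - 1)) (hβ : β ≤ 1) {k : ℕ} (hk : 2 ≤ k) :
    ‖bCoeff σ n β (fun j => if j = 0 then 1 else 2) k‖ = 2 * (1 - β) * poch σ n (k - 1) := by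
  obtain ⟨j, rfl⟩ : ∃ j, k = j + 2 := ⟨k - 2, by omega⟩
  rw [norm_bCoeff_add_two hσ hβ, show j + 2 - 1 = j + 1 by omega, if_neg (Nat.add_one_ne_zero j),
    Complex.norm_two]
  ring

end ClassB

theorem stmt11_general (σ : ℝ) (n : ℕ) (hσ : 0 < σ - ((n : ℝ) - 1))
    (β : ℝ) (hβ1 : β < 1) :
    (∀ (f : ℂ → ℂ) (a : ℕ → ℂ), MemB σ n β f → a 0 = 0 → a 1 = 1 →
      (∀ z ∈ Metric.ball (0 : ℂ) 1, HasSum (fun k : ℕ => a k * z ^ k) (f z)) →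
      ∀ k : ℕ, 2 ≤ k → ‖a k‖ ≤ 2 * (1 - β) * poch σ n (k - 1)) ∧
    ∃ (f : ℂ → ℂ) (a : ℕ → ℂ), MemB σ n β f ∧ a 0 = 0 ∧ a 1 = 1 ∧
      (∀ z ∈ Metric.ball (0 : ℂ) 1, HasSum (fun k : ℕ => a k * z ^ k) (f z)) ∧
      ∀ k : ℕ, 2 ≤ k → ‖a k‖ = 2 * (1 - β) * poch σ n (k - 1) := by
  refine ⟨fun f a hf _ _ ha k hk => norm_coeff_le_of_memB hσ hβ1.le hf ha hk, ?_⟩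
  refine ⟨_, bCoeff σ n β fun k => if k = 0 then 1 else 2, memB_extremal σ n β, rfl, ?_,
    hasSum_bCoeff hσ β hasSum_one_add_div_one_sub, fun k hk => norm_bCoeff_extremal hσ hβ1.le hk⟩
  simp [bCoeff, poch_zero_right hσ]

/-- Sharp coefficient bounds in `B_n^σ(β)`:
`|a_k| ≤ 2(1-β)[σ]_{n/(k-1)}` for `k ≥ 2`. -/
theorem stmt11 (σ : ℝ) (n : ℕ) (hσ : 0 < σ - ((n : ℝ) - 1))
    (β : ℝ) (hβ0 : 0 ≤ β) (hβ1 : β < 1) :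
    (∀ (f : ℂ → ℂ) (a : ℕ → ℂ), MemB σ n β f → a 0 = 0 → a 1 = 1 →
      (∀ z ∈ Metric.ball (0 : ℂ) 1, HasSum (fun k : ℕ => a k * z ^ k) (f z)) →
      ∀ k : ℕ, 2 ≤ k → ‖a k‖ ≤ 2 * (1 - β) * poch σ n (k - 1)) ∧
    ∃ (f : ℂ → ℂ) (a : ℕ → ℂ), MemB σ n β f ∧ a 0 = 0 ∧ a 1 = 1 ∧
      (∀ z ∈ Metric.ball (0 : ℂ) 1, HasSum (fun k : ℕ => a k * z ^ k) (f z)) ∧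
      ∀ k : ℕ, 2 ≤ k → ‖a k‖ = 2 * (1 - β) * poch σ n (k - 1) :=
  stmt11_general σ n hσ β hβ1
end

section
/- The inclusion B_{n+1}^σ(β) ⊂ B_n^σ(β) holds for every n ∈ ℕ and fixed real σ with σ-n > 0 (so that both classes are defined), where membership f ∈ B_m^σ(β) is characterized by (f(z)/z − β)/(1−β) ∈ P_m^σ. -/
open Complex MeasureTheory

/-! With `J_μ g (z) = μ ∫₀¹ s^(μ-1) g(sz) ds` (`radialAverage`) one has
`p_{σ,n+1} = J_{σ-n} p_{σ,n}`. For `μ > 0` the weight `μ s^(μ-1) ds` is a probability measure on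
`[0,1]`, so `J_μ` maps the Carathéodory class into itself, and by Fubini the operators `J_μ` and
`J_ν` commute. Hence `p_{σ,n+1} = (J_{σ-n} p)_{σ,n}` with `J_{σ-n} p ∈ P`. -/

open Metric Set Filter Topology

noncomputable def radialAverage (μ : ℝ) (g : ℂ → ℂ) (z : ℂ) : ℂ :=
  μ * ∫ s in (0 : ℝ)..1, ((s ^ (μ - 1) : ℝ) : ℂ) * g (s * z)

lemma sigmaIter_succ (σ : ℝ) (n : ℕ) (p : ℂ → ℂ) :
    sigmaIter σ (n + 1) p = radialAverage (σ - n) (sigmaIter σ n p) := by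
  funext z
  simp only [sigmaIter, radialAverage, sub_sub]
  norm_cast

lemma norm_ofReal_mul_le {s : ℝ} (hs : s ∈ Icc (0 : ℝ) 1) (z : ℂ) : ‖(s : ℂ) * z‖ ≤ ‖z‖ := by
  rw [norm_mul, Complex.norm_real, Real.norm_of_nonneg hs.1]
  exact mul_le_of_le_one_left (norm_nonneg z) hs.2

lemma ofReal_mul_mem_ball {s r : ℝ} (hs : s ∈ Icc (0 : ℝ) 1) {z : ℂ} (hz : z ∈ ball (0 : ℂ) r) :
    (s : ℂ) * z ∈ ball (0 : ℂ) r :=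
  mem_ball_zero_iff.2 ((norm_ofReal_mul_le hs z).trans_lt (mem_ball_zero_iff.1 hz))

lemma ContinuousOn.comp_ofReal_mul {g : ℂ → ℂ} {r : ℝ} (hg : ContinuousOn g (ball 0 r)) {z : ℂ}
    (hz : z ∈ ball (0 : ℂ) r) : ContinuousOn (fun s : ℝ => g (s * z)) (Icc 0 1) :=
  hg.comp (by fun_prop) fun _ hs => ofReal_mul_mem_ball hs hz

lemma intervalIntegrable_rpow_mul {μ : ℝ} (hμ : 0 < μ) {h : ℝ → ℂ}
    (hh : ContinuousOn h (Icc 0 1)) :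
    IntervalIntegrable (fun s : ℝ => ((s ^ (μ - 1) : ℝ) : ℂ) * h s) volume 0 1 := by
  have hw : IntervalIntegrable (fun s : ℝ => ((s ^ (μ - 1) : ℝ) : ℂ)) volume 0 1 :=
    intervalIntegrable_iff.2
      (intervalIntegrable_iff.1 (intervalIntegral.intervalIntegrable_rpow' (by linarith))).ofReal
  exact hw.mul_continuousOn (by rwa [uIcc_of_le zero_le_one])

lemma radialAverage_apply_zero {μ : ℝ} (hμ : 0 < μ) {g : ℂ → ℂ} (hg : g 0 = 1) :
    radialAverage μ g 0 = 1 := by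
  have hint : ∫ s in (0 : ℝ)..1, s ^ (μ - 1) = μ⁻¹ := by
    rw [integral_rpow (Or.inl (by linarith)), sub_add_cancel, Real.one_rpow,
      Real.zero_rpow hμ.ne', sub_zero, one_div]
  simp only [radialAverage, mul_zero, hg, mul_one, intervalIntegral.integral_ofReal, hint]
  push_cast
  exact mul_inv_cancel₀ (by exact_mod_cast hμ.ne')

lemma radialAverage_re_pos {μ R : ℝ} (hμ : 0 < μ) {g : ℂ → ℂ} (hgc : ContinuousOn g (ball 0 R))
    (hg : ∀ z ∈ ball (0 : ℂ) R, 0 < (g z).re) {z : ℂ} (hz : z ∈ ball (0 : ℂ) R) :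
    0 < (radialAverage μ g z).re := by
  have hre : (radialAverage μ g z).re = μ * ∫ s in (0 : ℝ)..1, s ^ (μ - 1) * (g (s * z)).re := by
    rw [radialAverage, Complex.re_ofReal_mul, ← RCLike.re_to_complex,
      ← intervalIntegral.intervalIntegral_re
        (intervalIntegrable_rpow_mul hμ (hgc.comp_ofReal_mul hz))]
    simp only [RCLike.re_to_complex, Complex.re_ofReal_mul]
  rw [hre]
  refine mul_pos hμ (intervalIntegral.intervalIntegral_pos_of_pos_on ?_ ?_ zero_lt_one)
  · refine (intervalIntegral.intervalIntegrable_rpow' (by linarith)).mul_continuousOn ?_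
    rw [uIcc_of_le zero_le_one]
    exact Complex.continuous_re.comp_continuousOn (hgc.comp_ofReal_mul hz)
  · intro s hs
    exact mul_pos (Real.rpow_pos_of_pos hs.1 _)
      (hg _ (ofReal_mul_mem_ball (Ioo_subset_Icc_self hs) hz))

lemma differentiableOn_radialAverage {μ R : ℝ} (hμ : 0 < μ) {g : ℂ → ℂ}
    (hg : DifferentiableOn ℂ g (ball 0 R)) : DifferentiableOn ℂ (radialAverage μ g) (ball 0 R) := by
  intro z₀ hz₀
  obtain ⟨r, hz₀r, hr1⟩ := exists_between (mem_ball_zero_iff.1 hz₀)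
  have hball : ball (0 : ℂ) r ⊆ ball 0 R := ball_subset_ball hr1.le
  have hnhds : ball (0 : ℂ) r ∈ 𝓝 z₀ := isOpen_ball.mem_nhds (mem_ball_zero_iff.2 hz₀r)
  have hg' : ContinuousOn (deriv g) (ball 0 R) :=
    (hg.analyticOnNhd isOpen_ball).deriv.differentiableOn.continuousOn
  -- `deriv g` is bounded on `closedBall 0 r`, which dominates the differentiated integrand
  obtain ⟨C, hC⟩ := (isCompact_closedBall (0 : ℂ) r).exists_bound_of_continuousOn
    (hg'.mono (closedBall_subset_ball hr1))
  have key := intervalIntegral.hasDerivAt_integral_of_dominated_loc_of_deriv_le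
    (μ := volume) (a := 0) (b := 1)
    (F := fun z (s : ℝ) => ((s ^ (μ - 1) : ℝ) : ℂ) * g (s * z))
    (F' := fun z (s : ℝ) => ((s ^ (μ - 1) : ℝ) : ℂ) * (deriv g (s * z) * s))
    (bound := fun s => s ^ (μ - 1) * C) hnhds ?meas ?int ?meas' ?bound ?intBound ?diff
  · exact (key.2.const_mul _).differentiableAt.differentiableWithinAt
  case meas =>
    filter_upwards [hnhds] with z hz
    exact (intervalIntegrable_iff.1 (intervalIntegrable_rpow_mul hμ
      (hg.continuousOn.comp_ofReal_mul (hball hz)))).aestronglyMeasurable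
  case int => exact intervalIntegrable_rpow_mul hμ (hg.continuousOn.comp_ofReal_mul hz₀)
  case meas' =>
    exact (intervalIntegrable_iff.1 (intervalIntegrable_rpow_mul hμ
      ((hg'.comp_ofReal_mul hz₀).mul (by fun_prop)))).aestronglyMeasurable
  case intBound => exact (intervalIntegral.intervalIntegrable_rpow' (by linarith)).mul_const C
  case bound =>
    refine Eventually.of_forall fun s hs z hz => ?_
    rw [uIoc_of_le zero_le_one] at hs
    have hsz : (s : ℂ) * z ∈ closedBall 0 r :=
      ball_subset_closedBall (ofReal_mul_mem_ball (Ioc_subset_Icc_self hs) hz)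
    rw [norm_mul, norm_mul, Complex.norm_real, Complex.norm_real, Real.norm_of_nonneg hs.1.le,
      Real.norm_of_nonneg (Real.rpow_nonneg hs.1.le _)]
    exact mul_le_mul_of_nonneg_left ((mul_le_of_le_one_right (norm_nonneg _) hs.2).trans
      (hC _ hsz)) (Real.rpow_nonneg hs.1.le _)
  case diff =>
    refine Eventually.of_forall fun s hs z hz => ?_
    rw [uIoc_of_le zero_le_one] at hs
    have hgd : HasDerivAt g (deriv g (s * z)) (s * z) :=
      (hg.differentiableAt (isOpen_ball.mem_nhds
        (ofReal_mul_mem_ball (Ioc_subset_Icc_self hs) (hball hz)))).hasDerivAt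
    exact ((hgd.comp z ((hasDerivAt_id z).const_mul (s : ℂ))).const_mul _).congr_deriv (by simp)

lemma integrableOn_rpow_mul_rpow_mul {μ ν : ℝ} (hμ : 0 < μ) (hν : 0 < ν) {Φ : ℝ × ℝ → ℂ}
    (hΦ : ContinuousOn Φ (Icc 0 1 ×ˢ Icc 0 1)) :
    IntegrableOn (fun p : ℝ × ℝ => ((p.1 ^ (μ - 1) : ℝ) : ℂ) * ((p.2 ^ (ν - 1) : ℝ) : ℂ) * Φ p)
      (Ioc 0 1 ×ˢ Ioc 0 1) := by
  have hweight : ∀ {l : ℝ}, 0 < l →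
      Integrable (fun s : ℝ => ((s ^ (l - 1) : ℝ) : ℂ)) (volume.restrict (Ioc 0 1)) := fun hl =>
    ((intervalIntegrable_iff_integrableOn_Ioc_of_le zero_le_one).1
      (intervalIntegral.intervalIntegrable_rpow' (by linarith))).ofReal
  have hprod := (hweight hμ).mul_prod (hweight hν)
  rw [Measure.prod_restrict, ← Measure.volume_eq_prod] at hprod
  have hsub : Ioc (0 : ℝ) 1 ×ˢ Ioc (0 : ℝ) 1 ⊆ Icc 0 1 ×ˢ Icc 0 1 :=
    prod_mono Ioc_subset_Icc_self Ioc_subset_Icc_self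
  have hmeas : MeasurableSet (Ioc (0 : ℝ) 1 ×ˢ Ioc (0 : ℝ) 1) :=
    measurableSet_Ioc.prod measurableSet_Ioc
  obtain ⟨C, hC⟩ := (isCompact_Icc.prod isCompact_Icc).exists_bound_of_continuousOn hΦ
  exact hprod.mul_bdd ((hΦ.mono hsub).aestronglyMeasurable hmeas)
    ((ae_restrict_iff' hmeas).2 (Eventually.of_forall fun p hp => hC p (hsub hp)))

lemma radialAverage_radialAverage (μ ν : ℝ) (g : ℂ → ℂ) (z : ℂ) :
    radialAverage μ (radialAverage ν g) z = μ * ν * ∫ s in (0 : ℝ)..1, ∫ t in (0 : ℝ)..1,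
      ((s ^ (μ - 1) : ℝ) : ℂ) * ((t ^ (ν - 1) : ℝ) : ℂ) * g (s * t * z) := by
  simp only [radialAverage, ← intervalIntegral.integral_const_mul, mul_assoc]
  congr 1
  funext s
  congr 1
  funext t
  ring_nf

lemma radialAverage_comm {μ ν R : ℝ} (hμ : 0 < μ) (hν : 0 < ν) {g : ℂ → ℂ}
    (hg : ContinuousOn g (ball 0 R)) {z : ℂ} (hz : z ∈ ball (0 : ℂ) R) :
    radialAverage μ (radialAverage ν g) z = radialAverage ν (radialAverage μ g) z := by
  have hΦ : ContinuousOn (fun p : ℝ × ℝ => g (p.1 * p.2 * z)) (Icc 0 1 ×ˢ Icc 0 1) :=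
    hg.comp (by fun_prop) fun p hp => by
      simpa only [mul_assoc] using ofReal_mul_mem_ball hp.1 (ofReal_mul_mem_ball hp.2 hz)
  rw [radialAverage_radialAverage, radialAverage_radialAverage,
    intervalIntegral_intervalIntegral_swap, mul_comm (μ : ℂ)]
  · refine congrArg _ (intervalIntegral.integral_congr fun s _ =>
      intervalIntegral.integral_congr fun t _ => ?_)
    ring_nf
  · rw [uIoc_of_le zero_le_one]
    exact integrableOn_rpow_mul_rpow_mul hμ hν hΦ

lemma isCara_radialAverage {μ : ℝ} (hμ : 0 < μ) {p : ℂ → ℂ} (hp : IsCara p) :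
    IsCara (radialAverage μ p) :=
  ⟨differentiableOn_radialAverage hμ hp.1, radialAverage_apply_zero hμ hp.2.1,
    fun _ hz => radialAverage_re_pos hμ hp.1.continuousOn hp.2.2 hz⟩

lemma Set.EqOn.radialAverage {R : ℝ} {g h : ℂ → ℂ} (hgh : EqOn g h (ball 0 R)) (μ : ℝ) :
    EqOn (radialAverage μ g) (radialAverage μ h) (ball 0 R) := fun z hz => by
  refine congrArg _ (intervalIntegral.integral_congr fun s hs => ?_)
  rw [uIcc_of_le zero_le_one] at hs
  simp only [hgh (ofReal_mul_mem_ball hs hz)]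

lemma differentiableOn_sigmaIter {σ R : ℝ} {n : ℕ} (hσ : ∀ k < n, (k : ℝ) < σ) {p : ℂ → ℂ}
    (hp : DifferentiableOn ℂ p (ball 0 R)) : DifferentiableOn ℂ (sigmaIter σ n p) (ball 0 R) := by
  induction n with
  | zero => exact hp
  | succ m ih =>
    rw [sigmaIter_succ]
    exact differentiableOn_radialAverage (sub_pos.2 (hσ m m.lt_succ_self))
      (ih fun k hk => hσ k (hk.trans m.lt_succ_self))

lemma sigmaIter_radialAverage {σ R : ℝ} {n : ℕ} (hσ : ∀ k < n, (k : ℝ) < σ) {p : ℂ → ℂ}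
    (hp : DifferentiableOn ℂ p (ball 0 R)) {μ : ℝ} (hμ : 0 < μ) :
    EqOn (sigmaIter σ n (radialAverage μ p)) (radialAverage μ (sigmaIter σ n p)) (ball 0 R) := by
  induction n with
  | zero => exact fun _ _ => rfl
  | succ m ih =>
    intro z hz
    have hσm : ∀ k < m, (k : ℝ) < σ := fun k hk => hσ k (hk.trans m.lt_succ_self)
    rw [sigmaIter_succ, sigmaIter_succ, (ih hσm).radialAverage _ hz]
    exact radialAverage_comm (sub_pos.2 (hσ m m.lt_succ_self)) hμ
      (differentiableOn_sigmaIter hσm hp).continuousOn hz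

theorem stmt12_general (σ : ℝ) (n : ℕ) (hσ : 0 < σ - (n : ℝ))
    (β : ℝ)
    (f : ℂ → ℂ) (hf : MemB σ (n + 1) β f) : MemB σ n β f := by
  obtain ⟨p, hp, hfp⟩ := hf
  have hσk : ∀ k < n, (k : ℝ) < σ := fun k hk => by
    have : (k : ℝ) < n := by exact_mod_cast hk
    linarith
  refine ⟨radialAverage (σ - n) p, isCara_radialAverage hσ hp, fun z hz => ?_⟩
  rw [hfp z hz, sigmaIter_succ, sigmaIter_radialAverage hσk hp.1 hσ hz]

/-- Inclusion `B_{n+1}^σ(β) ⊂ B_n^σ(β)`. -/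
theorem stmt12 (σ : ℝ) (n : ℕ) (hσ : 0 < σ - (n : ℝ))
    (β : ℝ) (hβ0 : 0 ≤ β) (hβ1 : β < 1)
    (f : ℂ → ℂ) (hf : MemB σ (n + 1) β f) : MemB σ n β f :=
  stmt12_general σ n hσ β f hf
end
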